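/- arXiv:1807.00473 — 5 statements merged into one kernel-verified Lean document; each statement's English description precedes it below -/
import Mathlib

section
/- Let H = (V, E) be a connected 3-uniform hypergraph with m edges. Then the vertex cover number satisfies τ(H) ≤ (2m + 1)/3. -/
variable {V : Type*} [Fintype V] [DecidableEq V] [Nonempty V]

/-- Two vertices are adjacent if some edge contains both. -/
def Adj (E : Finset (Finset V)) (u w : V) : Prop := ∃ e ∈ E, u ∈ e ∧ w ∈ e

/-- A hypergraph is connected if any two vertices are joined by a path
(equivalently, by a walk, i.e. a chain of adjacencies). -/
def HConnected (E : Finset (Finset V)) : Prop :=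
  ∀ u w : V, Relation.ReflTransGen (Adj E) u w

/-- A hypergraph is 3-uniform if every edge has exactly 3 vertices. -/
def Uniform3 (E : Finset (Finset V)) : Prop := ∀ e ∈ E, e.card = 3

/-- A cycle `v₁e₁v₂e₂…vₖeₖv₁` (k ≥ 2) in the hypergraph with edge set `E`:
distinct vertices, distinct edges, and `{vᵢ, vᵢ₊₁} ⊆ eᵢ` with indices mod k. -/
structure HCycle (E : Finset (Finset V)) where
  k : ℕ
  two_le : 2 ≤ k
  v : ZMod k → V
  e : ZMod k → Finset V
  v_inj : Function.Injective v
  e_inj : Function.Injective e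
  e_mem : ∀ i, e i ∈ E
  mem_left : ∀ i, v i ∈ e i
  mem_right : ∀ i, v (i + 1) ∈ e i

def HasCycle (E : Finset (Finset V)) : Prop := Nonempty (HCycle E)

/-- A hypertree is a connected acyclic hypergraph. -/
def IsHypertree (E : Finset (Finset V)) : Prop := HConnected E ∧ ¬ HasCycle E

/-- A vertex cover is a set of vertices meeting every edge. -/
def IsVertexCover (E : Finset (Finset V)) (S : Finset V) : Prop :=
  ∀ e ∈ E, ∃ x ∈ S, x ∈ e

/-- The vertex cover number τ: minimum cardinality of a vertex cover. -/
noncomputable def coverNum (E : Finset (Finset V)) : ℕ :=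
  sInf {n | ∃ S : Finset V, IsVertexCover E S ∧ S.card = n}

/-- A matching is a set of pairwise disjoint edges. -/
def IsMatching (E : Finset (Finset V)) (M : Finset (Finset V)) : Prop :=
  M ⊆ E ∧ ∀ e ∈ M, ∀ f ∈ M, e ≠ f → Disjoint e f

/-- The matching number ν: maximum cardinality of a matching. -/
noncomputable def matchNum (E : Finset (Finset V)) : ℕ :=
  sSup {n | ∃ M : Finset (Finset V), IsMatching E M ∧ M.card = n}

/-- A perfect matching is a matching covering every vertex. -/
def HasPerfectMatching (E : Finset (Finset V)) : Prop :=
  ∃ M : Finset (Finset V), IsMatching E M ∧ ∀ x : V, ∃ e ∈ M, x ∈ e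

/-- The degree of a vertex: the number of edges containing it. -/
def hdegree (E : Finset (Finset V)) (x : V) : ℕ := (E.filter fun e => x ∈ e).card

/-- The number of connected components of the hypergraph with vertex set `S`
and edge set `E`: the number of equivalence classes of vertices of `S` under
the equivalence generated by adjacency. -/
noncomputable def numComponents (S : Finset V) (E : Finset (Finset V)) : ℕ :=
  Nat.card (Quotient (Setoid.comap (Subtype.val : {x // x ∈ S} → V)
    (Relation.EqvGen.setoid (Adj E))))

/-- `C` is a connected component of the hypergraph with vertex set `S` and edge
set `E` : a nonempty subset of `S`, closed under reachability, any two of whose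
vertices are joined by a path. -/
def IsComponent (S : Finset V) (E : Finset (Finset V)) (C : Finset V) : Prop :=
  C ⊆ S ∧ C.Nonempty ∧
  (∀ x ∈ C, ∀ y ∈ S, Relation.ReflTransGen (Adj E) x y → y ∈ C) ∧
  (∀ x ∈ C, ∀ y ∈ C, Relation.ReflTransGen (Adj E) x y)

/-- A cycle is minimal if any two non-adjacent edges of it are disjoint. -/
def IsMinimalCycle {E : Finset (Finset V)} (C : HCycle E) : Prop :=
  ∀ i j : ZMod C.k, j ≠ i → j ≠ i + 1 → i ≠ j + 1 → Disjoint (C.e i) (C.e j)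

/-- Two cycles share a common vertex. -/
def ShareVertex {E : Finset (Finset V)} (C₁ C₂ : HCycle E) : Prop :=
  ∃ x : V, (∃ i, x ∈ C₁.e i) ∧ (∃ j, x ∈ C₂.e j)

/-! Induction on the number of edges, for hypergraphs whose edges have between `1` and `k + 1`
vertices and whose edges are connected through intersections: then `(k + 1) τ ≤ k m + 1`.
Run a breadth-first search in the intersection graph of the edges from a root edge, let `f` be
the parent of an edge at maximal distance `D`, and let `L` be the edges at distance `D` meeting `f`.
Every other edge keeps a parent outside `L ∪ {f}`, so both `F \ L` and `F \ (L ∪ {f})` stay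
connected. If `|f| ≤ |L|`, an inductive cover of `F \ L` already meets `f`, and adding the rest
of `f` covers `L` at a cost of `|f| - 1 ≤ k |L| / (k + 1)`. Otherwise at most `|L| ≤ k` vertices
of `f` meet `f` and all of `L`, a cost of at most `k (|L| + 1) / (k + 1)` for the `|L| + 1`
edges removed. -/

namespace SimpleGraph

variable {W : Type*} {G : SimpleGraph W} {u v : W}

lemma Reachable.exists_adj_dist_add_one_eq (h : G.Reachable u v) (hne : u ≠ v) :
    ∃ w, G.Adj w v ∧ G.dist u w + 1 = G.dist u v := by
  obtain ⟨p, hp⟩ := h.exists_walk_length_eq_dist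
  have hnil : ¬p.Nil := fun hn => hne hn.eq
  refine ⟨p.penultimate, p.adj_penultimate hnil, le_antisymm ?_ ?_⟩
  · have := G.dist_le p.dropLast
    have := p.length_dropLast_add_one hnil
    omega
  · calc G.dist u v ≤ G.dist u p.penultimate + G.dist p.penultimate v :=
          (p.adj_penultimate hnil).reachable.dist_triangle_right u
      _ = G.dist u p.penultimate + 1 := by
          rw [dist_eq_one_iff_adj.mpr (p.adj_penultimate hnil)]

end SimpleGraph

section

variable {α : Type*}

def edgeGraph (F : Finset (Finset α)) : SimpleGraph (Finset α) where
  Adj a b := a ∈ F ∧ b ∈ F ∧ a ≠ b ∧ ¬Disjoint a b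
  symm := ⟨fun _ _ ⟨ha, hb, hab, hd⟩ => ⟨hb, ha, hab.symm, fun h => hd h.symm⟩⟩
  loopless := ⟨fun _ h => h.2.2.1 rfl⟩

@[simp]
lemma edgeGraph_adj {F : Finset (Finset α)} {a b : Finset α} :
    (edgeGraph F).Adj a b ↔ a ∈ F ∧ b ∈ F ∧ a ≠ b ∧ ¬Disjoint a b :=
  Iff.rfl

def IsEdgeConnected (F : Finset (Finset α)) : Prop :=
  ∀ a ∈ F, ∀ b ∈ F, (edgeGraph F).Reachable a b

lemma edgeGraph_reachable_of_not_disjoint {F : Finset (Finset α)} {a b : Finset α} (ha : a ∈ F)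
    (hb : b ∈ F) (hab : ¬Disjoint a b) : (edgeGraph F).Reachable a b := by
  by_cases h : a = b
  · exact h ▸ SimpleGraph.Reachable.refl a
  · exact SimpleGraph.Adj.reachable (edgeGraph_adj.mpr ⟨ha, hb, h, hab⟩)

lemma isEdgeConnected_of_hConnected {E : Finset (Finset α)} (hne : ∀ e ∈ E, e.Nonempty)
    (h : HConnected E) : IsEdgeConnected E := by
  have walk : ∀ u w, Relation.ReflTransGen (Adj E) u w → ∀ a ∈ E, ∀ b ∈ E, u ∈ a → w ∈ b →
      (edgeGraph E).Reachable a b := by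
    intro u w huw
    induction huw with
    | refl =>
      exact fun a ha b hb hua hub =>
        edgeGraph_reachable_of_not_disjoint ha hb (Finset.not_disjoint_iff.mpr ⟨u, hua, hub⟩)
    | tail _ hvw ih =>
      obtain ⟨c, hc, hvc, hwc⟩ : ∃ c ∈ E, _ ∧ _ := hvw
      exact fun a ha b hb hua hwb => (ih a ha c hc hua hvc).trans
        (edgeGraph_reachable_of_not_disjoint hc hb
          (Finset.not_disjoint_iff.mpr ⟨_, hwc, hwb⟩))
  intro a ha b hb
  obtain ⟨u, hu⟩ := hne a ha
  obtain ⟨w, hw⟩ := hne b hb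
  exact walk u w (h u w) a ha b hb hu hw

lemma isEdgeConnected_of_exists_lt {F : Finset (Finset α)} (g₀ : Finset α) (d : Finset α → ℕ)
    (h : ∀ e ∈ F, e ≠ g₀ → ∃ a ∈ F, ¬Disjoint a e ∧ d a < d e) : IsEdgeConnected F := by
  have root : ∀ n, ∀ e ∈ F, d e = n → (edgeGraph F).Reachable g₀ e := by
    intro n
    induction n using Nat.strong_induction_on with
    | _ n ih =>
      intro e he hdn
      by_cases heg : e = g₀
      · exact heg ▸ SimpleGraph.Reachable.refl e
      obtain ⟨a, ha, hae, hda⟩ := h e he heg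
      exact (ih (d a) (hdn ▸ hda) a ha rfl).trans
        (edgeGraph_reachable_of_not_disjoint ha he hae)
  exact fun a ha b hb => (root _ a ha rfl).symm.trans (root _ b hb rfl)

lemma IsVertexCover.union_of_sdiff [DecidableEq α] {F G : Finset (Finset α)} {S T : Finset α}
    (hS : IsVertexCover (F \ G) S) (hT : IsVertexCover G T) : IsVertexCover F (S ∪ T) := by
  intro e he
  by_cases heG : e ∈ G
  · obtain ⟨x, hx, hxe⟩ := hT e heG
    exact ⟨x, Finset.mem_union_right S hx, hxe⟩
  · obtain ⟨x, hx, hxe⟩ := hS e (Finset.mem_sdiff.mpr ⟨he, heG⟩)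
    exact ⟨x, Finset.mem_union_left T hx, hxe⟩

lemma IsVertexCover.exists_subset_card_le [DecidableEq α] {L : Finset (Finset α)}
    {f : Finset α} (h : IsVertexCover L f) : ∃ X ⊆ f, X.card ≤ L.card ∧ IsVertexCover L X := by
  induction L using Finset.induction_on with
  | empty =>
    exact ⟨∅, Finset.empty_subset f, le_rfl, fun e he => absurd he (Finset.notMem_empty e)⟩
  | insert l L hl ih =>
    obtain ⟨X, hXf, hXL, hX⟩ := ih fun e he => h e (Finset.mem_insert_of_mem he)
    obtain ⟨x, hxf, hxl⟩ := h l (Finset.mem_insert_self l L)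
    refine ⟨insert x X, Finset.insert_subset hxf hXf, ?_, ?_⟩
    · rw [Finset.card_insert_of_notMem hl]
      exact (Finset.card_insert_le x X).trans (Nat.succ_le_succ hXL)
    · intro e he
      rcases Finset.mem_insert.mp he with rfl | he
      · exact ⟨x, Finset.mem_insert_self x X, hxl⟩
      · obtain ⟨y, hy, hye⟩ := hX e he
        exact ⟨y, Finset.mem_insert_of_mem hy, hye⟩

lemma IsEdgeConnected.exists_peel [DecidableEq α] {F : Finset (Finset α)}
    (hconn : IsEdgeConnected F) (hF : 1 < F.card) :
    ∃ f ∈ F, ∃ L ⊆ F, L.Nonempty ∧ f ∉ L ∧ IsVertexCover L f ∧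
      IsEdgeConnected (F \ L) ∧ IsEdgeConnected (F \ insert f L) := by
  obtain ⟨g₀, hg₀, e₁, he₁, hne⟩ := Finset.one_lt_card.mp hF
  set d : Finset α → ℕ := (edgeGraph F).dist g₀
  have parent : ∀ e ∈ F, e ≠ g₀ → ∃ a ∈ F, ¬Disjoint a e ∧ d a + 1 = d e := by
    intro e he heg
    obtain ⟨a, hadj, hda⟩ := (hconn g₀ hg₀ e he).exists_adj_dist_add_one_eq (Ne.symm heg)
    rw [edgeGraph_adj] at hadj
    exact ⟨a, hadj.1, hadj.2.2.2, hda⟩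
  obtain ⟨top, htop, hmax⟩ := Finset.exists_max_image F d ⟨g₀, hg₀⟩
  obtain ⟨f, hf, hftop, hdf⟩ := parent top htop fun h => by
    obtain ⟨a, -, -, hda⟩ := parent e₁ he₁ hne.symm
    have : d top = 0 := by rw [h]; exact SimpleGraph.dist_self
    have := hmax e₁ he₁
    omega
  set L := F.filter fun e => d e = d top ∧ ¬Disjoint e f
  have hLF : L ⊆ F := Finset.filter_subset _ F
  have hfL : f ∉ L := fun h => by have := (Finset.mem_filter.mp h).2.1; omega
  have parent_notMem : ∀ e ∈ F, e ≠ g₀ → ∃ a ∈ F, a ∉ L ∧ ¬Disjoint a e ∧ d a < d e := by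
    intro e he heg
    obtain ⟨a, ha, hae, hda⟩ := parent e he heg
    refine ⟨a, ha, fun haL => ?_, hae, by omega⟩
    have := (Finset.mem_filter.mp haL).2.1
    have := hmax e he
    omega
  refine ⟨f, hf, L, hLF, ⟨top, Finset.mem_filter.mpr ⟨htop, rfl, disjoint_comm.not.mp hftop⟩⟩,
    hfL, fun e he => ?_, isEdgeConnected_of_exists_lt g₀ d fun e he heg => ?_,
    isEdgeConnected_of_exists_lt g₀ d fun e he heg => ?_⟩
  · obtain ⟨x, hxe, hxf⟩ := Finset.not_disjoint_iff.mp (Finset.mem_filter.mp he).2.2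
    exact ⟨x, hxf, hxe⟩
  · obtain ⟨he, heL⟩ := Finset.mem_sdiff.mp he
    obtain ⟨a, ha, haL, hae, hda⟩ := parent_notMem e he heg
    exact ⟨a, Finset.mem_sdiff.mpr ⟨ha, haL⟩, hae, hda⟩
  · obtain ⟨heF, hefL⟩ := Finset.mem_sdiff.mp he
    obtain ⟨a, ha, haL, hae, hda⟩ := parent_notMem e heF heg
    refine ⟨a, Finset.mem_sdiff.mpr ⟨ha, ?_⟩, hae, hda⟩
    intro hafL
    rcases Finset.mem_insert.mp hafL with rfl | haL'
    · have := hmax e heF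
      exact hefL (Finset.mem_insert_of_mem
        (Finset.mem_filter.mpr ⟨heF, by omega, disjoint_comm.not.mp hae⟩))
    · exact haL haL'

lemma exists_isVertexCover_card_le_of_card_le_one {F : Finset (Finset α)}
    (hF : ∀ e ∈ F, e.Nonempty) (h : F.card ≤ 1) : ∃ S, IsVertexCover F S ∧ S.card ≤ F.card := by
  rcases Nat.le_one_iff_eq_zero_or_eq_one.mp h with h0 | h1
  · rw [Finset.card_eq_zero.mp h0]
    exact ⟨∅, fun e he => absurd he (Finset.notMem_empty e), le_rfl⟩
  · obtain ⟨e, rfl⟩ := Finset.card_eq_one.mp h1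
    obtain ⟨x, hx⟩ := hF e (Finset.mem_singleton_self e)
    refine ⟨{x}, fun e' he' => ?_, le_rfl⟩
    exact ⟨x, Finset.mem_singleton_self x, Finset.mem_singleton.mp he' ▸ hx⟩

theorem IsEdgeConnected.exists_isVertexCover [DecidableEq α] {F : Finset (Finset α)}
    (k : ℕ) (hF : ∀ e ∈ F, e.Nonempty ∧ e.card ≤ k + 1) (hconn : IsEdgeConnected F) :
    ∃ S, IsVertexCover F S ∧ (k + 1) * S.card ≤ k * F.card + 1 := by
  induction F using Finset.strongInduction with | H F ih => ?_
  obtain hF1 | hF1 := le_or_gt F.card 1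
  · obtain ⟨S, hS, hScard⟩ :=
      exists_isVertexCover_card_le_of_card_le_one (fun e he => (hF e he).1) hF1
    exact ⟨S, hS, by nlinarith⟩
  obtain ⟨f, hf, L, hLF, hL, hfL, hLf, hconnL, hconnfL⟩ := hconn.exists_peel hF1
  have hfk := (hF f hf).2
  by_cases hfLcard : f.card ≤ L.card
  · obtain ⟨S, hS, hScard⟩ := ih (F \ L) (Finset.sdiff_ssubset hLF hL)
      (fun e he => hF e (Finset.mem_sdiff.mp he).1) hconnL
    obtain ⟨y, hyS, hyf⟩ := hS f (Finset.mem_sdiff.mpr ⟨hf, hfL⟩)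
    refine ⟨S ∪ f, IsVertexCover.union_of_sdiff hS hLf, ?_⟩
    have hinter : 1 ≤ (S ∩ f).card :=
      Finset.card_pos.mpr ⟨y, Finset.mem_inter.mpr ⟨hyS, hyf⟩⟩
    have := Finset.card_union_add_card_inter S f
    have := Finset.card_sdiff_add_card_eq_card hLF
    nlinarith
  · have hfLF : insert f L ⊆ F := Finset.insert_subset hf hLF
    obtain ⟨S, hS, hScard⟩ := ih (F \ insert f L)
      (Finset.sdiff_ssubset hfLF (Finset.insert_nonempty f L))
      (fun e he => hF e (Finset.mem_sdiff.mp he).1) hconnfL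
    obtain ⟨X, hXf, hXL, hX⟩ := IsVertexCover.exists_subset_card_le hLf
    have hXf' : IsVertexCover (insert f L) X := by
      intro e he
      rcases Finset.mem_insert.mp he with rfl | he
      · obtain ⟨l, hl⟩ := hL
        obtain ⟨x, hx, -⟩ := hX l hl
        exact ⟨x, hx, hXf hx⟩
      · exact hX e he
    refine ⟨S ∪ X, IsVertexCover.union_of_sdiff hS hXf', ?_⟩
    have := Finset.card_union_le S X
    have := Finset.card_sdiff_add_card_eq_card hfLF
    rw [Finset.card_insert_of_notMem hfL] at this
    nlinarith

end

/-- For every connected 3-uniform hypergraph with m edges,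
τ(H) ≤ (2m+1)/3, i.e. 3·τ(H) ≤ 2m + 1. -/
theorem stmt0 (E : Finset (Finset V)) (h3 : Uniform3 E) (hconn : HConnected E) :
    3 * coverNum E ≤ 2 * E.card + 1 := by
  have hedge : ∀ e ∈ E, e.Nonempty ∧ e.card ≤ 2 + 1 := fun e he =>
    ⟨Finset.card_pos.mp (by rw [h3 e he]; omega), (h3 e he).le⟩
  obtain ⟨S, hS, hScard⟩ := (isEdgeConnected_of_hConnected
    (fun e he => (hedge e he).1) hconn).exists_isVertexCover 2 hedge
  calc 3 * coverNum E ≤ 3 * S.card := Nat.mul_le_mul_left 3 (Nat.sInf_le ⟨S, hS, rfl⟩)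
    _ ≤ 2 * E.card + 1 := hScard
end

section
/- Let H = (V, E) be a 3-uniform hypertree with m edges that admits a perfect matching. Then τ(H) = (2m + 1)/3. -/
/-!
View a hypergraph through its incidence graph, the bipartite graph on vertices and edges with
`v ~ e` iff `v ∈ e`. A Berge cycle of the hypergraph is the same thing as a cycle of its
incidence graph, so a hypertree has a tree as incidence graph. Counting the edges of that tree
gives `|V| + m = ∑ |e| + 1 = 3m + 1`.

Root the tree at a vertex `r`. Every hyperedge `e` has a unique neighbour closer to `r`, its top,
and `e` is the parent of each of its other vertices. The tops of the edges of a perfect matching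
`M` cover `H`: an edge `e ∉ M` has a vertex `v` other than its top, and `v` must be the top of its
matching edge `f`, since otherwise `e` and `f` would both be the parent of `v`. Hence
`τ = |M| = |V| / 3 = (2m + 1) / 3`.
-/

variable {V : Type*} [Fintype V] [DecidableEq V] [Nonempty V]

open Finset

namespace SimpleGraph

variable {β : Type*} {G : SimpleGraph β}

lemma Walk.getVert_two_mul_val_add_one {u : β} (c : G.Walk u u) {k : ℕ} [NeZero k]
    (hk : c.length = 2 * k) (i : ZMod k) :
    c.getVert (2 * (i + 1).val) = c.getVert (2 * i.val + 2) := by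
  have := i.val_lt
  rw [ZMod.val_add, ZMod.val_one_eq_one_mod, Nat.add_mod_mod]
  rcases Nat.lt_or_ge (i.val + 1) k with h | h
  · rw [Nat.mod_eq_of_lt h]
    rfl
  · rw [show i.val + 1 = k by omega, Nat.mod_self, Nat.mul_zero, c.getVert_zero,
      show 2 * i.val + 2 = c.length by omega, c.getVert_length]

lemma Connected.exists_adj_dist_add_one (hG : G.Connected) {r x : β} (hx : x ≠ r) :
    ∃ y, G.Adj x y ∧ G.dist r y + 1 = G.dist r x := by
  obtain ⟨p, hp⟩ := hG.exists_walk_length_eq_dist x r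
  obtain ⟨y, hxy, q, rfl⟩ := p.exists_eq_cons_of_ne hx
  refine ⟨y, hxy, le_antisymm ?_ ?_⟩
  · have h1 : G.dist r y ≤ q.length := dist_comm (G := G) ▸ dist_le q
    have h2 : G.dist r x = q.length + 1 := by rw [dist_comm, ← hp, Walk.length_cons]
    omega
  · rw [← dist_eq_one_iff_adj.2 hxy.symm]
    exact hG.dist_triangle

lemma IsTree.eq_of_adj_of_dist_add_one (hG : G.IsTree) {r x y y' : β} (hy : G.Adj x y)
    (hy' : G.Adj x y') (hdy : G.dist r y + 1 = G.dist r x) (hdy' : G.dist r y' + 1 = G.dist r x) :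
    y = y' := by
  have hpath (z : β) (h : G.Adj x z) (hz : G.dist r z + 1 = G.dist r x) :
      ∃ p : G.Walk z r, (Walk.cons h p).IsPath := by
    obtain ⟨p, -, hp⟩ := hG.connected.exists_path_of_dist z r
    refine ⟨p, (Walk.cons h p).isPath_of_length_eq_dist ?_⟩
    rw [Walk.length_cons, hp, dist_comm, hz, dist_comm]
  obtain ⟨p, hp⟩ := hpath y hy hdy
  obtain ⟨p', hp'⟩ := hpath y' hy' hdy'
  simpa using congrArg (fun q : G.Path x r => q.1.getVert 1)
    ((hG.isAcyclic.subsingleton_path x r).elim ⟨_, hp⟩ ⟨_, hp'⟩)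

end SimpleGraph

section Matching

variable {α : Type*} {E : Finset (Finset α)}

lemma IsMatching.card_le_of_isVertexCover {M : Finset (Finset α)} {S : Finset α}
    (hM : IsMatching E M) (hS : IsVertexCover E S) : #M ≤ #S := by
  choose g hgS hge using fun f : M => hS f (hM.1 f.2)
  calc #M = #M.attach := card_attach.symm
    _ ≤ #S := card_le_card_of_injOn g (fun f _ => hgS f) fun f _ f' _ h => by
      by_contra hne
      exact disjoint_left.1 (hM.2 f f.2 f' f'.2 (Subtype.coe_ne_coe.2 hne)) (hge f) (h ▸ hge f')

lemma coverNum_eq_card_of_isMatching {M : Finset (Finset α)} {S : Finset α}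
    (hM : IsMatching E M) (hS : IsVertexCover E S) (hSM : #S ≤ #M) : coverNum E = #M := by
  have hmem : #S ∈ {n | ∃ S : Finset α, IsVertexCover E S ∧ #S = n} := ⟨S, hS, rfl⟩
  exact le_antisymm ((Nat.sInf_le hmem).trans hSM)
    (le_csInf ⟨_, hmem⟩ fun _ ⟨_, hS', h⟩ => h ▸ hM.card_le_of_isVertexCover hS')

lemma IsMatching.sum_card_eq_card [Fintype α] {M : Finset (Finset α)} (hM : IsMatching E M)
    (hcov : ∀ x, ∃ f ∈ M, x ∈ f) : ∑ f ∈ M, #f = Fintype.card α := by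
  classical
  rw [← card_biUnion fun f hf f' hf' => hM.2 f hf f' hf', ← card_univ]
  congr
  exact eq_univ_of_forall fun x => mem_biUnion.2 (hcov x)

end Matching

def incidenceGraph {α : Type*} (E : Finset (Finset α)) : SimpleGraph (α ⊕ E) where
  Adj
    | .inl v, .inr e => v ∈ e.1
    | .inr e, .inl v => v ∈ e.1
    | _, _ => False
  symm := ⟨by rintro (_ | _) (_ | _) h <;> exact h⟩
  loopless := ⟨by rintro (_ | _) h <;> exact h⟩

section IncidenceGraph

variable {α : Type*} {E : Finset (Finset α)}

@[simp]
lemma incidenceGraph_adj_inl_inr {v : α} {e : E} :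
    (incidenceGraph E).Adj (.inl v) (.inr e) ↔ v ∈ e.1 := Iff.rfl

@[simp]
lemma incidenceGraph_adj_inr_inl {v : α} {e : E} :
    (incidenceGraph E).Adj (.inr e) (.inl v) ↔ v ∈ e.1 := Iff.rfl

@[simp]
lemma incidenceGraph_not_adj_inl_inl {v w : α} : ¬ (incidenceGraph E).Adj (.inl v) (.inl w) :=
  id

@[simp]
lemma incidenceGraph_not_adj_inr_inr {e f : E} : ¬ (incidenceGraph E).Adj (.inr e) (.inr f) :=
  id

lemma incidenceGraph_isLeft_eq_not_isLeft_of_adj {a b : α ⊕ E} (h : (incidenceGraph E).Adj a b) :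
    a.isLeft = !b.isLeft := by
  rcases a with _ | _ <;> rcases b with _ | _ <;> simp_all

lemma incidenceGraph_reachable_inl_of_reflTransGen {u w : α}
    (h : Relation.ReflTransGen (Adj E) u w) : (incidenceGraph E).Reachable (.inl u) (.inl w) := by
  induction h with
  | refl => rfl
  | tail _ hadj ih =>
    obtain ⟨e, he, hu, hw⟩ := hadj
    have hu' : (incidenceGraph E).Adj (.inl _) (.inr ⟨e, he⟩) := hu
    have hw' : (incidenceGraph E).Adj (.inr ⟨e, he⟩) (.inl _) := hw
    exact ih.trans (hu'.reachable.trans hw'.reachable)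

lemma incidenceGraph_connected [Nonempty α] (hc : HConnected E)
    (hne : ∀ e ∈ E, e.Nonempty) : (incidenceGraph E).Connected := by
  have hleft : ∀ a : α ⊕ E, ∃ u, (incidenceGraph E).Reachable (.inl u) a := by
    rintro (u | ⟨e, he⟩)
    · exact ⟨u, .rfl⟩
    · obtain ⟨u, hu⟩ := hne e he
      exact ⟨u, SimpleGraph.Adj.reachable (by simpa using hu)⟩
  refine .mk fun a b => ?_
  obtain ⟨u, hu⟩ := hleft a
  obtain ⟨w, hw⟩ := hleft b
  exact hu.symm.trans <| (incidenceGraph_reachable_inl_of_reflTransGen (hc u w)).trans hw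

lemma incidenceGraph_getVert_isLeft {v : α} {b : α ⊕ E}
    (p : (incidenceGraph E).Walk (.inl v) b) {i : ℕ} (hi : i ≤ p.length) :
    (p.getVert i).isLeft ↔ Even i := by
  induction i with
  | zero => simp
  | succ i ih =>
    rw [Nat.even_add_one, ← ih (by omega),
      incidenceGraph_isLeft_eq_not_isLeft_of_adj (p.adj_getVert_succ (by omega)).symm]
    simp

end IncidenceGraph

section IncidenceCycle

variable {α : Type*} {E : Finset (Finset α)}

lemma exists_isCycle_incidenceGraph_inl {a : α ⊕ E} {c : (incidenceGraph E).Walk a a}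
    (hc : c.IsCycle) :
    ∃ (v : α) (c' : (incidenceGraph E).Walk (.inl v) (.inl v)), c'.IsCycle := by
  classical
  rcases a with v | e
  · exact ⟨v, c, hc⟩
  · have hsnd := c.adj_snd hc.not_nil
    rcases hx : c.snd with v | f
    · have hmem : Sum.inl v ∈ c.support := hx ▸ c.getVert_mem_support 1
      exact ⟨v, c.rotate _ hmem, hc.rotate hmem⟩
    · simp [hx] at hsnd

lemma hasCycle_of_isCycle_incidenceGraph {v : α}
    {c : (incidenceGraph E).Walk (.inl v) (.inl v)} (hc : c.IsCycle) : HasCycle E := by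
  have hlen := hc.three_le_length
  obtain ⟨k, hk⟩ : Even c.length := by
    rw [← incidenceGraph_getVert_isLeft c le_rfl, c.getVert_length]; rfl
  have : NeZero k := ⟨by omega⟩
  have hvert : ∀ i : ZMod k, ∃ u, c.getVert (2 * i.val) = .inl u := fun i => by
    rw [← Sum.isLeft_iff, incidenceGraph_getVert_isLeft c (by have := i.val_lt; omega)]
    exact even_two_mul _
  have hedge : ∀ i : ZMod k, ∃ f : E, c.getVert (2 * i.val + 1) = .inr f := fun i => by
    rw [← Sum.isRight_iff, ← Sum.not_isLeft,
      incidenceGraph_getVert_isLeft c (by have := i.val_lt; omega)]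
    simp
  choose vf hvf using hvert
  choose ef hef using hedge
  refine ⟨⟨k, by omega, vf, fun i => (ef i).1, fun i j hij => ?_, fun i j hij => ?_,
    fun i => (ef i).2, fun i => ?_, fun i => ?_⟩⟩
  · have := hc.getVert_injOn' (x₁ := 2 * i.val) (x₂ := 2 * j.val)
      (by have := i.val_lt; simp; omega) (by have := j.val_lt; simp; omega)
      (by rw [hvf, hvf, hij])
    exact ZMod.val_injective k (by omega)
  · have := hc.getVert_injOn' (x₁ := 2 * i.val + 1) (x₂ := 2 * j.val + 1)
      (by have := i.val_lt; simp; omega) (by have := j.val_lt; simp; omega)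
      (by rw [hef, hef, Subtype.val_injective hij])
    exact ZMod.val_injective k (by omega)
  · have := c.adj_getVert_succ (i := 2 * i.val) (by have := i.val_lt; omega)
    rwa [hvf, hef] at this
  · have := c.adj_getVert_succ (i := 2 * i.val + 1) (by have := i.val_lt; omega)
    rwa [hef, ← c.getVert_two_mul_val_add_one (by omega), hvf] at this

end IncidenceCycle

section IncidenceTree

variable {α : Type*} {E : Finset (Finset α)}

lemma incidenceGraph_isAcyclic (h : ¬ HasCycle E) : (incidenceGraph E).IsAcyclic := by
  intro a c hc
  obtain ⟨v, c', hc'⟩ := exists_isCycle_incidenceGraph_inl hc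
  exact h (hasCycle_of_isCycle_incidenceGraph hc')

lemma IsHypertree.isTree_incidenceGraph [Nonempty α] (hE : IsHypertree E)
    (hne : ∀ e ∈ E, e.Nonempty) : (incidenceGraph E).IsTree :=
  ⟨incidenceGraph_connected hE.1 hne, incidenceGraph_isAcyclic hE.2⟩

lemma incidenceGraph_isBipartiteWith :
    (incidenceGraph E).IsBipartiteWith (Set.range .inl) (Set.range .inr) where
  disjoint := by simp [Set.disjoint_left]
  mem_of_adj := by rintro (_ | _) (_ | _) h <;> simp_all

lemma card_edgeFinset_incidenceGraph [Fintype α] [Fintype (incidenceGraph E).edgeSet] :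
    #(incidenceGraph E).edgeFinset = ∑ e ∈ E, #e := by
  classical
  have hdeg (e : E) : (incidenceGraph E).degree (.inr e) = #e.1 := by
    rw [← SimpleGraph.card_neighborFinset_eq_degree, ← card_map (.inl : α ↪ α ⊕ E)]
    congr 1
    ext (x | x) <;> simp
  have hbip := (incidenceGraph E).isBipartiteWith_sum_degrees_eq_card_edges'
    (s := univ.map .inl) (t := univ.map .inr)
    (by simpa using incidenceGraph_isBipartiteWith (E := E))
  rw [sum_map] at hbip
  calc #(incidenceGraph E).edgeFinset = ∑ e : E, (incidenceGraph E).degree (.inr e) := by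
        convert hbip.symm; rfl
    _ = ∑ e ∈ E, #e := by rw [sum_congr rfl fun e _ => hdeg e, sum_coe_sort E card]

lemma IsHypertree.card_add_card_eq_sum_card_add_one [Fintype α] [Nonempty α] (hE : IsHypertree E)
    (hne : ∀ e ∈ E, e.Nonempty) : Fintype.card α + #E = ∑ e ∈ E, #e + 1 := by
  classical
  have := (hE.isTree_incidenceGraph hne).card_edgeFinset
  rw [card_edgeFinset_incidenceGraph, Fintype.card_sum, Fintype.card_coe] at this
  exact this.symm

end IncidenceTree

section HypertreeCover

variable {α : Type*} {E : Finset (Finset α)}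

lemma exists_parent_of_isTree_incidenceGraph (hT : (incidenceGraph E).IsTree) (r : α) (e : E) :
    ∃ u ∈ e.1, ∀ v ∈ e.1, v ≠ u →
      (incidenceGraph E).dist (.inl r) (.inr e) + 1 =
        (incidenceGraph E).dist (.inl r) (.inl v) := by
  obtain ⟨u | f, hadj, hdist⟩ :=
    hT.connected.exists_adj_dist_add_one (r := .inl r) Sum.inr_ne_inl
  · refine ⟨u, hadj, fun v hv hvu => ?_⟩
    have hv' : (incidenceGraph E).Adj (.inr e) (.inl v) := hv
    refine ((hT.dist_eq_dist_add_one_of_adj (.inl r) hv').resolve_left fun h => hvu ?_).symm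
    exact Sum.inl_injective (hT.eq_of_adj_of_dist_add_one hv' hadj h.symm hdist)
  · simp at hadj

lemma exists_isVertexCover_card_le_of_isTree [Nonempty α] (hT : (incidenceGraph E).IsTree)
    (h2 : ∀ e ∈ E, 2 ≤ #e) {M : Finset (Finset α)} (hM : IsMatching E M)
    (hcov : ∀ x, ∃ f ∈ M, x ∈ f) : ∃ S, IsVertexCover E S ∧ #S ≤ #M := by
  classical
  obtain ⟨r⟩ := ‹Nonempty α›
  choose top htop hpar using exists_parent_of_isTree_incidenceGraph hT r
  refine ⟨M.attach.image fun f : M => top ⟨f, hM.1 f.2⟩, fun e he => ?_,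
    card_image_le.trans card_attach.le⟩
  by_cases heM : e ∈ M
  · exact ⟨_, mem_image_of_mem _ (mem_attach M ⟨e, heM⟩), htop _⟩
  obtain ⟨v, hv, hvtop⟩ := exists_mem_ne (h2 e he) (top ⟨e, he⟩)
  obtain ⟨f, hfM, hvf⟩ := hcov v
  refine ⟨v, mem_image.2 ⟨⟨f, hfM⟩, mem_attach _ _, ?_⟩, hv⟩
  by_contra hne
  -- otherwise both `e` and `f` would be the parent of `v`
  have := hT.eq_of_adj_of_dist_add_one (x := .inl v) (y := .inr ⟨e, he⟩)
    (y' := .inr ⟨f, hM.1 hfM⟩) hv hvf (hpar _ v hv hvtop) (hpar _ v hvf (Ne.symm hne))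
  simp only [Sum.inr.injEq, Subtype.mk.injEq] at this
  exact heM (this ▸ hfM)

end HypertreeCover

/-- A 3-uniform hypertree with m edges admitting a perfect
matching satisfies τ(H) = (2m+1)/3, i.e. 3·τ(H) = 2m + 1. -/
theorem stmt2 (E : Finset (Finset V)) (h3 : Uniform3 E) (htree : IsHypertree E)
    (hpm : HasPerfectMatching E) :
    3 * coverNum E = 2 * E.card + 1 := by
  obtain ⟨M, hM, hcov⟩ := hpm
  have hne (e : Finset V) (he : e ∈ E) : e.Nonempty := card_pos.1 (by rw [h3 e he]; norm_num)
  obtain ⟨S, hS, hSM⟩ := exists_isVertexCover_card_le_of_isTree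
    (htree.isTree_incidenceGraph hne) (fun e he => by rw [h3 e he]; norm_num) hM hcov
  have hV := htree.card_add_card_eq_sum_card_add_one hne
  have hVM := hM.sum_card_eq_card hcov
  rw [sum_congr rfl h3, sum_const, smul_eq_mul] at hV
  rw [sum_congr rfl fun f hf => h3 f (hM.1 hf), sum_const, smul_eq_mul] at hVM
  rw [coverNum_eq_card_of_isMatching hM hS hSM]
  omega
end

section
/- Let H = (V, E) be a 3-uniform hypertree. Then the vertex cover number equals the matching number: τ(H) = ν(H). -/
variable {V : Type*} [Fintype V] [DecidableEq V] [Nonempty V]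

/-!
`ν ≤ τ` holds in every hypergraph, since a vertex cover meets the edges of a matching in distinct
vertices. For `τ ≤ ν`, look at the last edge `e₀` of a longest path in an acyclic hypergraph
whose edges have at least two vertices: any other edge meets `e₀` only in the penultimate vertex
`a` of the path, since otherwise the path could be closed to a cycle or extended. Putting `a` into
the cover and `e₀` into the matching, and deleting the edges through `a`, the claim follows by
induction on the number of edges.
-/

section

variable {α : Type*} {E : Finset (Finset α)}

theorem HasCycle.mono {E' : Finset (Finset α)} (h : E' ⊆ E) (hc : HasCycle E') : HasCycle E :=
  let ⟨C⟩ := hc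
  ⟨{ C with e_mem := fun i => h (C.e_mem i) }⟩

/-- The path `v 0, e 0, v 1, …, e (n - 1), v n` of length `n`. -/
structure IsPath (E : Finset (Finset α)) (n : ℕ) (v : ℕ → α) (e : ℕ → Finset α) : Prop where
  v_injOn : Set.InjOn v (Set.Iic n)
  e_injOn : Set.InjOn e (Set.Iio n)
  e_mem : ∀ i < n, e i ∈ E
  mem_left : ∀ i < n, v i ∈ e i
  mem_right : ∀ i < n, v (i + 1) ∈ e i

namespace IsPath

variable {n : ℕ} {v : ℕ → α} {e : ℕ → Finset α}

theorem mono (hP : IsPath E n v e) {m : ℕ} (hm : m ≤ n) : IsPath E m v e where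
  v_injOn := hP.v_injOn.mono (Set.Iic_subset_Iic.mpr hm)
  e_injOn := hP.e_injOn.mono (Set.Iio_subset_Iio hm)
  e_mem i hi := hP.e_mem i (by omega)
  mem_left i hi := hP.mem_left i (by omega)
  mem_right i hi := hP.mem_right i (by omega)

theorem drop (hP : IsPath E n v e) {i : ℕ} (hi : i ≤ n) :
    IsPath E (n - i) (fun t => v (i + t)) (fun t => e (i + t)) where
  v_injOn s (hs : s ≤ n - i) t (ht : t ≤ n - i) h := by
    have := hP.v_injOn (show i + s ≤ n by omega) (show i + t ≤ n by omega) h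
    omega
  e_injOn s (hs : s < n - i) t (ht : t < n - i) h := by
    have := hP.e_injOn (show i + s < n by omega) (show i + t < n by omega) h
    omega
  e_mem t ht := hP.e_mem _ (by omega)
  mem_left t ht := hP.mem_left _ (by omega)
  mem_right t ht := hP.mem_right (i + t) (by omega)

theorem snoc (hP : IsPath E n v e) {g : Finset α} (hg : g ∈ E) (hge : ∀ i < n, e i ≠ g)
    (hvg : v n ∈ g) {u : α} (hu : u ∈ g) (hvu : ∀ i ≤ n, v i ≠ u) :
    IsPath E (n + 1) (Function.update v (n + 1) u) (Function.update e n g) where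
  v_injOn s (hs : s ≤ n + 1) t (ht : t ≤ n + 1) h := by
    simp only [Function.update_apply] at h
    split_ifs at h with hs' ht'
    · omega
    · exact absurd h.symm (hvu t (by omega))
    · exact absurd h (hvu s (by omega))
    · exact hP.v_injOn (show s ≤ n by omega) (show t ≤ n by omega) h
  e_injOn s (hs : s < n + 1) t (ht : t < n + 1) h := by
    simp only [Function.update_apply] at h
    split_ifs at h with hs' ht'
    · omega
    · exact absurd h.symm (hge t (by omega))
    · exact absurd h (hge s (by omega))
    · exact hP.e_injOn (show s < n by omega) (show t < n by omega) h
  e_mem i hi := by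
    simp only [Function.update_apply]
    split_ifs
    · exact hg
    · exact hP.e_mem i (by omega)
  mem_left i hi := by
    simp only [Function.update_apply, if_neg (show i ≠ n + 1 by omega)]
    split_ifs with h
    · exact h ▸ hvg
    · exact hP.mem_left i (by omega)
  mem_right i hi := by
    simp only [Function.update_apply, add_left_inj]
    split_ifs
    · exact hu
    · exact hP.mem_right i (by omega)

theorem card_le (hP : IsPath E n v e) : n ≤ E.card := by
  simpa using Finset.card_le_card_of_injOn e (fun i hi => hP.e_mem i (Finset.mem_range.mp hi))
    (fun i hi j hj h => hP.e_injOn (by simpa using hi) (by simpa using hj) h)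

theorem hasCycle (hP : IsPath E n v e) (hn : 0 < n) {g : Finset α} (hg : g ∈ E)
    (hge : ∀ i < n, e i ≠ g) (h0 : v 0 ∈ g) (hn' : v n ∈ g) : HasCycle E := by
  let e' : ℕ → Finset α := fun i => if i = n then g else e i
  have hlt (i : ZMod (n + 1)) : i.val < n + 1 := ZMod.val_lt i
  have hsucc (i : ZMod (n + 1)) : (i + 1).val = (i.val + 1) % (n + 1) := by
    rw [ZMod.val_add, ZMod.val_one'' (by omega)]
  refine ⟨⟨n + 1, by omega, fun i => v i.val, fun i => e' i.val, ?_, ?_, ?_, ?_, ?_⟩⟩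
  · intro i j h
    exact ZMod.val_injective _ (hP.v_injOn (Nat.le_of_lt_succ (hlt i))
      (Nat.le_of_lt_succ (hlt j)) h)
  · intro i j h
    have hi := hlt i
    have hj := hlt j
    apply ZMod.val_injective
    simp only [e'] at h
    split_ifs at h with hi' hj'
    · omega
    · exact absurd h.symm (hge _ (by omega))
    · exact absurd h (hge _ (by omega))
    · exact hP.e_injOn (show i.val < n by omega) (show j.val < n by omega) h
  · intro i
    simp only [e']
    split_ifs
    · exact hg
    · exact hP.e_mem _ (by have := hlt i; omega)
  · intro i
    simp only [e']
    split_ifs with h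
    · rwa [h]
    · exact hP.mem_left _ (by have := hlt i; omega)
  · intro i
    simp only [e', hsucc]
    split_ifs with h
    · rwa [h, Nat.mod_self]
    · rw [Nat.mod_eq_of_lt (by have := hlt i; omega)]
      exact hP.mem_right _ (by have := hlt i; omega)

theorem eq_last_of_end_mem (hac : ¬HasCycle E) (hE : ∀ f ∈ E, 2 ≤ f.card)
    (hP : IsPath E (n + 1) v e) (hmax : ∀ m v' e', IsPath E m v' e' → m ≤ n + 1)
    {f : Finset α} (hf : f ∈ E) (hvf : v (n + 1) ∈ f) : f = e n := by
  by_contra hfn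
  by_cases hj : ∃ j < n, e j = f
  · obtain ⟨j, hj, rfl⟩ := hj
    refine hac ((hP.drop (i := j + 1) (by omega)).hasCycle (by omega) hf (fun t ht h => ?_)
      (hP.mem_right j (by omega)) (by rwa [show j + 1 + (n + 1 - (j + 1)) = n + 1 by omega]))
    have := hP.e_injOn (show j + 1 + t < n + 1 by omega) (show j < n + 1 by omega) h
    omega
  push Not at hj
  have hfresh : ∀ i < n + 1, e i ≠ f := fun i hi h =>
    if hin : i = n then hfn (hin ▸ h.symm) else hj i (by omega) h
  obtain ⟨u, hu, huv⟩ := Finset.exists_mem_ne (hE f hf) (v (n + 1))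
  by_cases hon : ∃ i ≤ n + 1, v i = u
  · obtain ⟨i, hi, rfl⟩ := hon
    have hin : i ≠ n + 1 := fun h => huv (h ▸ rfl)
    exact hac ((hP.drop hi).hasCycle (by omega) hf (fun t ht => hfresh _ (by omega))
      (by rwa [add_zero]) (by rwa [show i + (n + 1 - i) = n + 1 by omega]))
  · push Not at hon
    have := hmax _ _ _ (hP.snoc hf hfresh hvf hu hon)
    omega

end IsPath

theorem exists_longest_path (hE : ∀ f ∈ E, 2 ≤ f.card) (hne : E.Nonempty) :
    ∃ n v e, IsPath E (n + 1) v e ∧ ∀ m v' e', IsPath E m v' e' → m ≤ n + 1 := by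
  classical
  obtain ⟨f, hf⟩ := hne
  obtain ⟨a, ha, b, hb, hab⟩ := Finset.one_lt_card.mp (hE f hf)
  have hedge : IsPath E 1 (fun i => if i = 0 then a else b) (fun _ => f) :=
    { v_injOn := fun i (hi : i ≤ 1) j (hj : j ≤ 1) h => by
        interval_cases i <;> interval_cases j <;> simp_all
      e_injOn := fun i (hi : i < 1) j (hj : j < 1) _ => by omega
      e_mem := fun _ _ => hf
      mem_left := fun i hi => by simpa [show i = 0 by omega] using ha
      mem_right := fun _ _ => by simpa using hb }
  let P (m : ℕ) : Prop := ∃ v e, IsPath E m v e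
  let N := Nat.findGreatest P E.card
  have hN : 1 ≤ N := Nat.le_findGreatest hedge.card_le ⟨_, _, hedge⟩
  obtain ⟨v, e, hP⟩ : P N := Nat.findGreatest_spec hedge.card_le ⟨_, _, hedge⟩
  refine ⟨N - 1, v, e, by rwa [Nat.sub_add_cancel hN], fun m v' e' h => ?_⟩
  have : m ≤ N := Nat.le_findGreatest (P := P) h.card_le ⟨v', e', h⟩
  omega

theorem exists_leaf_edge (hac : ¬HasCycle E) (hE : ∀ f ∈ E, 2 ≤ f.card) (hne : E.Nonempty) :
    ∃ e₀ ∈ E, ∃ a ∈ e₀, ∀ f ∈ E, f ≠ e₀ → ∀ x ∈ f, x ∈ e₀ → x = a := by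
  obtain ⟨n, v, e, hP, hmax⟩ := exists_longest_path hE hne
  have hen : e n ∈ E := hP.e_mem n (by omega)
  have hlast : ∀ i < n, e i ≠ e n := fun i hi h => by
    have := hP.e_injOn (show i < n + 1 by omega) (show n < n + 1 by omega) h
    omega
  refine ⟨e n, hen, v n, hP.mem_left n (by omega), fun f hf hfn x hxf hxe => ?_⟩
  by_contra hxa
  by_cases hon : ∃ i < n, v i = x
  · obtain ⟨i, hi, rfl⟩ := hon
    exact hac (((hP.mono n.le_succ).drop hi.le).hasCycle (by omega) hen
      (fun t ht => hlast _ (by omega)) (by rwa [add_zero])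
      (by rw [show i + (n - i) = n by omega]; exact hP.mem_left n (by omega)))
  · push Not at hon
    have hx : ∀ i ≤ n, v i ≠ x := fun i hi =>
      if hin : i = n then hin ▸ Ne.symm hxa else hon i (by omega)
    -- replacing the end of the path by `x` gives another longest path
    have hP' : IsPath E (n + 1) (Function.update v (n + 1) x) e := by
      simpa using (hP.mono n.le_succ).snoc hen hlast (hP.mem_left n (by omega)) hxe hx
    exact hfn (hP'.eq_last_of_end_mem hac hE hmax hf (by simpa using hxf))

theorem IsMatching.card_le_card {M : Finset (Finset α)} {S : Finset α} (hM : IsMatching E M)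
    (hS : IsVertexCover E S) : M.card ≤ S.card :=
  Finset.card_le_card_of_forall_subsingleton (fun f x => x ∈ f) (fun f hf => hS f (hM.1 hf))
    fun _ _ f ⟨hf, hxf⟩ g ⟨hg, hxg⟩ => by_contra fun hfg =>
      Finset.disjoint_left.mp (hM.2 f hf g hg hfg) hxf hxg

theorem IsMatching.insert [DecidableEq α] {M : Finset (Finset α)} {E' : Finset (Finset α)}
    (hM : IsMatching E' M) (hE' : E' ⊆ E) {e₀ : Finset α} (he₀ : e₀ ∈ E)
    (hdisj : ∀ f ∈ M, Disjoint e₀ f) : IsMatching E (insert e₀ M) := by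
  refine ⟨Finset.insert_subset he₀ (hM.1.trans hE'), ?_⟩
  simp only [Finset.mem_insert]
  rintro f (rfl | hf) g (rfl | hg) hfg
  · exact absurd rfl hfg
  · exact hdisj g hg
  · exact (hdisj f hf).symm
  · exact hM.2 f hf g hg hfg

theorem exists_isVertexCover_isMatching_card_le (hac : ¬HasCycle E)
    (hE : ∀ f ∈ E, 2 ≤ f.card) :
    ∃ S M, IsVertexCover E S ∧ IsMatching E M ∧ S.card ≤ M.card := by
  classical
  induction E using Finset.strongInduction with
  | H E ih =>
  rcases E.eq_empty_or_nonempty with rfl | hne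
  · exact ⟨∅, ∅, by simp [IsVertexCover], by simp [IsMatching], le_rfl⟩
  obtain ⟨e₀, he₀, a, ha, hleaf⟩ := exists_leaf_edge hac hE hne
  let E' := E.filter (a ∉ ·)
  have hE'E : E' ⊆ E := Finset.filter_subset _ _
  have he₀E' : e₀ ∉ E' := by simp [E', ha]
  obtain ⟨S, M, hS, hM, hSM⟩ := ih E' (Finset.filter_ssubset.mpr ⟨e₀, he₀, by simpa using ha⟩)
    (fun h => hac (h.mono hE'E)) (fun f hf => hE f (hE'E hf))
  have hdisj : ∀ f ∈ M, Disjoint e₀ f := fun f hf => by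
    obtain ⟨hfE, haf⟩ := Finset.mem_filter.mp (hM.1 hf)
    refine Finset.disjoint_left.mpr fun x hx₀ hxf => haf ?_
    rwa [← hleaf f hfE (fun h => haf (h ▸ ha)) x hxf hx₀]
  refine ⟨insert a S, insert e₀ M, fun f hf => ?_, hM.insert hE'E he₀ hdisj, ?_⟩
  · by_cases haf : a ∈ f
    · exact ⟨a, Finset.mem_insert_self _ _, haf⟩
    · obtain ⟨x, hx, hxf⟩ := hS f (by simp [E', hf, haf])
      exact ⟨x, Finset.mem_insert_of_mem hx, hxf⟩
  · calc (insert a S).card ≤ S.card + 1 := Finset.card_insert_le _ _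
      _ ≤ M.card + 1 := by omega
      _ = (insert e₀ M).card := (Finset.card_insert_of_notMem fun h => he₀E' (hM.1 h)).symm

theorem coverNum_le_card {S : Finset α} (hS : IsVertexCover E S) : coverNum E ≤ S.card :=
  Nat.sInf_le ⟨S, hS, rfl⟩

theorem exists_isVertexCover_card_eq_coverNum {S : Finset α} (hS : IsVertexCover E S) :
    ∃ S₀, IsVertexCover E S₀ ∧ S₀.card = coverNum E :=
  Nat.sInf_mem (s := {n | ∃ S, IsVertexCover E S ∧ S.card = n}) ⟨_, S, hS, rfl⟩

theorem card_le_matchNum {M : Finset (Finset α)} (hM : IsMatching E M) :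
    M.card ≤ matchNum E := by
  refine le_csSup ⟨E.card, ?_⟩ ⟨M, hM, rfl⟩
  rintro _ ⟨M', hM', rfl⟩
  exact Finset.card_le_card hM'.1

theorem matchNum_le_card {S : Finset α} (hS : IsVertexCover E S) : matchNum E ≤ S.card :=
  csSup_le' (by rintro _ ⟨M, hM, rfl⟩; exact hM.card_le_card hS)

end

/-- For a 3-uniform hypertree, τ(H) = ν(H). -/
theorem stmt6 (E : Finset (Finset V)) (h3 : Uniform3 E) (htree : IsHypertree E) :
    coverNum E = matchNum E := by
  obtain ⟨S, M, hS, hM, hSM⟩ :=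
    exists_isVertexCover_isMatching_card_le htree.2 fun e he => by rw [h3 e he]; norm_num
  obtain ⟨S₀, hS₀, hS₀card⟩ := exists_isVertexCover_card_eq_coverNum hS
  exact le_antisymm ((coverNum_le_card hS).trans (hSM.trans (card_le_matchNum hM)))
    (hS₀card ▸ matchNum_le_card hS₀)
end

section
/- Let C = v₁e₁v₂e₂…vₖeₖv₁ be a cycle in a hypergraph H that is not a minimal cycle. Then there exist two distinct cycles C₁ and C₂ in H, each of whose edges belongs to {e₁,…,eₖ} or is obtained from restricting to that edge set, such that the length of C₁ is strictly less than k, the length of C₂ is strictly less than k, the sum of the lengths of C₁ and C₂ is at most k + 2, and C₁ and C₂ share a common vertex. -/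
variable {V : Type*} [Fintype V] [DecidableEq V] [Nonempty V]

/-!
A common point `x` of two non-adjacent edges `eᵢ, eⱼ` cuts `C` into two shorter cycles through
`x`. If `x` is not a vertex of `C`, they are `x eᵢ vᵢ₊₁ … eⱼ x` and `x eⱼ vⱼ₊₁ … eᵢ x`, of total
length `k + 2`. If `x = vₘ`, one of `eᵢ, eⱼ`, say `eₚ`, is neither `eₘ₋₁` nor `eₘ`, and the cycles
`vₘ eₘ vₘ₊₁ … eₚ vₘ` and `vₘ eₚ vₚ₊₁ … eₘ₋₁ vₘ` have total length `k + 1`. In both cases the two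
cycles are arcs of `C` closed up by `x`, and some edge lies on one arc but not the other.
-/

theorem ZMod.add_natCast_inj {k : ℕ} (a : ZMod k) {r s : ℕ} (hr : r < k) (hs : s < k) :
    a + r = a + s ↔ r = s := by
  rw [add_right_inj, ZMod.natCast_eq_natCast_iff', Nat.mod_eq_of_lt hr, Nat.mod_eq_of_lt hs]

theorem ZMod.add_natCast_ne_self {k : ℕ} (a : ZMod k) {r : ℕ} (h₀ : 0 < r) (hr : r < k) :
    a + r ≠ a := by
  intro h
  have := (ZMod.add_natCast_inj a hr (h₀.trans hr)).mp (by rwa [Nat.cast_zero, add_zero])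
  omega

theorem ZMod.exists_eq_add_natCast {k : ℕ} [NeZero k] {a b : ZMod k} (h₀ : b ≠ a)
    (h₁ : b + 1 ≠ a) : ∃ s : ℕ, 1 ≤ s ∧ s + 2 ≤ k ∧ b = a + s := by
  have hb : b = a + (b - a).val := by rw [ZMod.natCast_zmod_val]; ring
  refine ⟨(b - a).val, ?_, ?_, hb⟩
  · by_contra! hs
    exact h₀ (by rw [hb, Nat.lt_one_iff.mp hs, Nat.cast_zero, add_zero])
  · have hlt := (b - a).val_lt
    by_contra! hs
    apply h₁
    rw [hb, add_assoc, ← Nat.cast_add_one, show (b - a).val + 1 = k by omega,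
      ZMod.natCast_self, add_zero]

namespace HCycle

variable {α : Type*} {E : Finset (Finset α)}

instance (C : HCycle E) : NeZero C.k := ⟨by have := C.two_le; omega⟩

theorem exists_of_seq {n : ℕ} (hn : 1 ≤ n) (w : ℕ → α) (f : ℕ → Finset α)
    (hw : Set.InjOn w (Set.Iic n)) (hf : Set.InjOn f (Set.Iic n)) (hfE : ∀ r ≤ n, f r ∈ E)
    (hleft : ∀ r ≤ n, w r ∈ f r) (hright : ∀ r < n, w (r + 1) ∈ f r) (hclose : w 0 ∈ f n) :
    ∃ D : HCycle E, D.k = n + 1 ∧ Set.range D.e = f '' Set.Iic n ∧ D.e 0 = f 0 := by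
  have hval (r : ZMod (n + 1)) : r.val ∈ Set.Iic n := Nat.lt_succ_iff.mp r.val_lt
  refine ⟨⟨n + 1, by omega, fun r => w r.val, fun r => f r.val,
    fun r s h => ZMod.val_injective _ (hw (hval r) (hval s) h),
    fun r s h => ZMod.val_injective _ (hf (hval r) (hval s) h),
    fun r => hfE _ (hval r), fun r => hleft _ (hval r), fun r => ?_⟩, rfl, ?_, rfl⟩
  · rcases (Set.mem_Iic.mp (hval r)).lt_or_eq with hr | hr
    · have : (r + 1).val = r.val + 1 := by
        rw [ZMod.val_add_of_lt] <;> rw [ZMod.val_one''] <;> omega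
      simpa only [this] using hright _ hr
    · have : r + 1 = 0 := by rw [← ZMod.natCast_zmod_val r, hr]; exact ZMod.natCast_self' n
      simpa only [this, ZMod.val_zero, hr] using hclose
  · ext g
    constructor
    · rintro ⟨r, rfl⟩
      exact ⟨r.val, hval r, rfl⟩
    · rintro ⟨r, hr, rfl⟩
      exact ⟨r, by simp only [ZMod.val_cast_of_lt (Nat.lt_succ_of_le hr)]⟩


variable (C : HCycle E)

def arc (a : ZMod C.k) (n : ℕ) : Set (Finset α) := (fun r : ℕ => C.e (a + r)) '' Set.Iic n

/-- Then `x eₐ vₐ₊₁ eₐ₊₁ … vₐ₊ₙ eₐ₊ₙ x` is a cycle. -/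
def ClosesArc (x : α) (a : ZMod C.k) (n : ℕ) : Prop :=
  x ∈ C.e a ∧ x ∈ C.e (a + n) ∧ ∀ r : ℕ, 0 < r → r ≤ n → C.v (a + r) ≠ x

def SplitsIntoShorter : Prop :=
  ∃ C₁ C₂ : HCycle E,
    Set.range C₁.e ⊆ Set.range C.e ∧ Set.range C₂.e ⊆ Set.range C.e ∧
    C₁.k < C.k ∧ C₂.k < C.k ∧ C₁.k + C₂.k ≤ C.k + 2 ∧
    Set.range C₁.e ≠ Set.range C₂.e ∧ ShareVertex C₁ C₂

theorem arc_subset_range (a : ZMod C.k) (n : ℕ) : C.arc a n ⊆ Set.range C.e := by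
  rintro _ ⟨r, -, rfl⟩
  exact ⟨_, rfl⟩

theorem e_add_mem_arc_iff {a : ZMod C.k} {n r : ℕ} (hn : n < C.k) (hr : r < C.k) :
    C.e (a + r) ∈ C.arc a n ↔ r ≤ n := by
  refine ⟨?_, fun h => ⟨r, h, rfl⟩⟩
  rintro ⟨s, hs, h⟩
  rw [(ZMod.add_natCast_inj a hr ((Set.mem_Iic.mp hs).trans_lt hn)).mp (C.e_inj h).symm]
  exact hs

theorem exists_of_closesArc {x : α} {a : ZMod C.k} {n : ℕ} (h : C.ClosesArc x a n)
    (hn : 1 ≤ n) (hnk : n < C.k) :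
    ∃ D : HCycle E, D.k = n + 1 ∧ Set.range D.e = C.arc a n ∧ x ∈ D.e 0 := by
  obtain ⟨hstart, hend, hinner⟩ := h
  have hinj {r s : ℕ} (hr : r ≤ n) (hs : s ≤ n) (h : a + r = a + s) : r = s :=
    (ZMod.add_natCast_inj a (hr.trans_lt hnk) (hs.trans_lt hnk)).mp h
  set w : ℕ → α := fun r => if r = 0 then x else C.v (a + r)
  have hw : Set.InjOn w (Set.Iic n) := by
    intro r hr s hs h
    simp only [w] at h
    split_ifs at h with hr0 hs0 hs0
    · rw [hr0, hs0]
    · exact absurd h.symm (hinner s (Nat.pos_of_ne_zero hs0) hs)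
    · exact absurd h (hinner r (Nat.pos_of_ne_zero hr0) hr)
    · exact hinj hr hs (C.v_inj h)
  have hleft (r : ℕ) (_ : r ≤ n) : w r ∈ C.e (a + r) := by
    simp only [w]
    split_ifs with hr0
    · simpa [hr0] using hstart
    · exact C.mem_left _
  have hright (r : ℕ) (_ : r < n) : w (r + 1) ∈ C.e (a + r) := by
    simpa only [w, Nat.add_one_ne_zero, if_false, Nat.cast_add_one, ← add_assoc] using
      C.mem_right (a + r)
  obtain ⟨D, hk, he, he0⟩ := exists_of_seq hn w (fun r => C.e (a + r)) hw
    (fun r hr s hs h => hinj hr hs (C.e_inj h)) (fun r _ => C.e_mem _) hleft hright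
    (by simpa [w] using hend)
  refine ⟨D, hk, he, ?_⟩
  rwa [he0, Nat.cast_zero, add_zero]

theorem splitsIntoShorter_of_closesArc {x : α} {a₁ a₂ : ZMod C.k} {n₁ n₂ : ℕ}
    (h₁ : C.ClosesArc x a₁ n₁) (h₂ : C.ClosesArc x a₂ n₂) (hn₁ : 1 ≤ n₁) (hn₂ : 1 ≤ n₂)
    (hlt₁ : n₁ + 1 < C.k) (hlt₂ : n₂ + 1 < C.k) (hsum : n₁ + n₂ ≤ C.k)
    (hne : C.arc a₁ n₁ ≠ C.arc a₂ n₂) : C.SplitsIntoShorter := by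
  obtain ⟨D₁, hk₁, he₁, hx₁⟩ := C.exists_of_closesArc h₁ hn₁ (by omega)
  obtain ⟨D₂, hk₂, he₂, hx₂⟩ := C.exists_of_closesArc h₂ hn₂ (by omega)
  refine ⟨D₁, D₂, he₁ ▸ C.arc_subset_range _ _, he₂ ▸ C.arc_subset_range _ _,
    by omega, by omega, by omega, he₁ ▸ he₂ ▸ hne, x, ⟨0, hx₁⟩, ⟨0, hx₂⟩⟩

theorem splitsIntoShorter_of_not_mem_range_v {x : α} (hx : x ∉ Set.range C.v) {i : ZMod C.k}
    {t : ℕ} (ht : 2 ≤ t) (htk : t + 2 ≤ C.k) (hi : x ∈ C.e i) (hj : x ∈ C.e (i + t)) :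
    C.SplitsIntoShorter := by
  have hback : i + t + (C.k - t : ℕ) = i := by
    rw [add_assoc, ← Nat.cast_add, Nat.add_sub_cancel' (by omega), ZMod.natCast_self, add_zero]
  have hprev : i + (C.k - 1 : ℕ) = i + t + (C.k - t - 1 : ℕ) := by
    rw [add_assoc, ← Nat.cast_add]
    congr 2
    omega
  have hne : C.arc (i + t) (C.k - t) ≠ C.arc i t := by
    intro h
    have hmem : C.e (i + (C.k - 1 : ℕ)) ∈ C.arc (i + t) (C.k - t) := by
      rw [hprev, C.e_add_mem_arc_iff (by omega) (by omega)]
      omega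
    rw [h, C.e_add_mem_arc_iff (by omega) (by omega)] at hmem
    omega
  exact C.splitsIntoShorter_of_closesArc ⟨hj, by rwa [hback], fun r _ _ h => hx ⟨_, h⟩⟩
    ⟨hi, hj, fun r _ _ h => hx ⟨_, h⟩⟩ (by omega) (by omega) (by omega) (by omega) (by omega) hne

theorem splitsIntoShorter_of_v_mem_e (m : ZMod C.k) {s : ℕ} (hs : 1 ≤ s) (hsk : s + 2 ≤ C.k)
    (h : C.v m ∈ C.e (m + s)) : C.SplitsIntoShorter := by
  have hround (r : ℕ) (hr : s + r = C.k) : m + s + r = m := by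
    rw [add_assoc, ← Nat.cast_add, hr, ZMod.natCast_self, add_zero]
  have hclose₁ : C.ClosesArc (C.v m) m s :=
    ⟨C.mem_left m, h, fun r hr hrs heq =>
      (m.add_natCast_ne_self hr (by omega)) (C.v_inj heq)⟩
  have hclose₂ : C.ClosesArc (C.v m) (m + s) (C.k - s - 1) := by
    refine ⟨h, ?_, fun r hr hrs heq => ?_⟩
    · have hm : m + s + (C.k - s - 1 : ℕ) + 1 = m := by
        rw [add_assoc (m + s), ← Nat.cast_add_one, Nat.sub_add_cancel (by omega),
          hround _ (by omega)]
      simpa only [hm] using C.mem_right (m + s + (C.k - s - 1 : ℕ))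
    · refine (m.add_natCast_ne_self (r := s + r) (by omega) (by omega)) ?_
      rw [Nat.cast_add, ← add_assoc]
      exact C.v_inj heq
  have hne : C.arc m s ≠ C.arc (m + s) (C.k - s - 1) := by
    intro heq
    have hmem : C.e m ∈ C.arc m s := ⟨0, Nat.zero_le _, by simp⟩
    have hm : C.e m = C.e (m + s + (C.k - s : ℕ)) := by rw [hround _ (by omega)]
    rw [heq, hm, C.e_add_mem_arc_iff (by omega) (by omega)] at hmem
    omega
  exact C.splitsIntoShorter_of_closesArc hclose₁ hclose₂ (by omega) (by omega) (by omega)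
    (by omega) (by omega) hne

end HCycle

/-- If a cycle C of length k is not minimal, then there are
two distinct cycles C₁, C₂ whose edges all come from the edges of C, of lengths
< k each, with total length ≤ k + 2, sharing a common vertex. -/
theorem stmt7 (E : Finset (Finset V)) (C : HCycle E) (hC : ¬ IsMinimalCycle C) :
    ∃ C₁ C₂ : HCycle E,
      Set.range C₁.e ⊆ Set.range C.e ∧ Set.range C₂.e ⊆ Set.range C.e ∧
      C₁.k < C.k ∧ C₂.k < C.k ∧ C₁.k + C₂.k ≤ C.k + 2 ∧
      Set.range C₁.e ≠ Set.range C₂.e ∧ ShareVertex C₁ C₂ := by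
  obtain ⟨i, j, hji, hji₁, hij₁, hij⟩ : ∃ i j : ZMod C.k,
      j ≠ i ∧ j ≠ i + 1 ∧ i ≠ j + 1 ∧ ¬Disjoint (C.e i) (C.e j) := by
    simpa [IsMinimalCycle] using hC
  obtain ⟨x, hxi, hxj⟩ := Finset.not_disjoint_iff.mp hij
  by_cases hx : x ∈ Set.range C.v
  · obtain ⟨m, rfl⟩ := hx
    obtain ⟨p, hp, hpm, hpm₁⟩ : ∃ p, C.v m ∈ C.e p ∧ p ≠ m ∧ p + 1 ≠ m := by
      by_cases hi : i ≠ m ∧ i + 1 ≠ m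
      · exact ⟨i, hxi, hi⟩
      · exact ⟨j, hxj, by grind⟩
    obtain ⟨s, hs, hsk, rfl⟩ := ZMod.exists_eq_add_natCast hpm hpm₁
    exact C.splitsIntoShorter_of_v_mem_e m hs hsk hp
  · obtain ⟨t, ht, htk, rfl⟩ := ZMod.exists_eq_add_natCast hji hij₁.symm
    have ht₂ : 2 ≤ t := by
      by_contra! ht₁
      obtain rfl : t = 1 := by omega
      exact hji₁ (by rw [Nat.cast_one])
    exact C.splitsIntoShorter_of_not_mem_range_v hx ht₂ htk hxi hxj
end

section
/- Let H = (V, E) be a connected 3-uniform hypergraph with m edges that contains no cycle (i.e., H is a hypertree). Then τ(H) ≤ (2m + 1)/3. -/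
variable {V : Type*} [Fintype V] [DecidableEq V] [Nonempty V]

/-! A 3-uniform forest with `m` edges and `c` trees has `2m + c` vertices, so degree counting
yields a pendant edge `{x, y, z}`: `y` and `z` lie in no other edge. Putting `x` into the cover and
deleting the `d` edges through `x` splits the tree of `x` into pieces, each of which meets one of
the at most `2d - 2` vertices of the deleted edges outside `{x, y, z}`. Hence the induction runs on
the bound `3τ ≤ 2m + |W|` for acyclic 3-uniform hypergraphs in which every edge is joined to a
vertex of `W`; for a hypertree, `W` is a single vertex. -/

open Finset

section Hypergraph

variable {α : Type*} {A E F : Finset (Finset α)} {u v w x y z : α}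

theorem Adj.symm (h : Adj E u w) : Adj E w u :=
  let ⟨e, he, hu, hw⟩ := h; ⟨e, he, hw, hu⟩

theorem Adj.mono (hEF : E ⊆ F) (h : Adj E u w) : Adj F u w :=
  let ⟨e, he, hu, hw⟩ := h; ⟨e, hEF he, hu, hw⟩

instance : Std.Symm (Adj E) := ⟨fun _ _ => Adj.symm⟩

theorem reflTransGen_adj_symm (h : Relation.ReflTransGen (Adj E) u w) :
    Relation.ReflTransGen (Adj E) w u :=
  Std.Symm.symm _ _ h

theorem reflTransGen_adj_mono (hEF : E ⊆ F) (h : Relation.ReflTransGen (Adj E) u w) :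
    Relation.ReflTransGen (Adj F) u w :=
  Relation.ReflTransGen.mono (fun _ _ => Adj.mono hEF) _ _ h

theorem reflTransGen_adj_of_mem {e : Finset α} (he : e ∈ E) (hu : u ∈ e) (hw : w ∈ e) :
    Relation.ReflTransGen (Adj E) u w :=
  .single ⟨e, he, hu, hw⟩

theorem HasCycle.mono_s10 (hEF : E ⊆ F) (h : HasCycle E) : HasCycle F :=
  let ⟨C⟩ := h
  ⟨{ C with e_mem := fun i => hEF (C.e_mem i) }⟩

/-- The vertices `vs 0, …, vs n` and edges `es 0, …, es (n - 1)` form a walk in `A`. -/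
def IsWalk (A : Finset (Finset α)) (n : ℕ) (vs : ℕ → α) (es : ℕ → Finset α) : Prop :=
  ∀ i < n, es i ∈ A ∧ vs i ∈ es i ∧ vs (i + 1) ∈ es i

theorem exists_isWalk_of_reflTransGen (h : Relation.ReflTransGen (Adj A) u v) :
    ∃ n vs es, IsWalk A n vs es ∧ vs 0 = u ∧ vs n = v := by
  classical
  induction h with
  | refl => exact ⟨0, fun _ => u, fun _ => ∅, fun i hi => absurd hi (Nat.not_lt_zero i), rfl, rfl⟩
  | @tail b c _ hbc ih =>
    obtain ⟨n, vs, es, hw, h0, hn⟩ := ih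
    obtain ⟨g, hg, hb, hc⟩ := hbc
    refine ⟨n + 1, Function.update vs (n + 1) c, Function.update es n g, fun i hi => ?_,
      by simp [h0], by simp⟩
    rcases Nat.lt_succ_iff_lt_or_eq.1 hi with hi | rfl
    · simpa [Function.update_apply, hi.ne, (Nat.lt_succ_of_lt hi).ne, hi.ne'] using hw i hi
    · simpa [hn] using ⟨hg, hb, hc⟩

theorem IsWalk.skip {n : ℕ} {vs : ℕ → α} {es : ℕ → Finset α} (hw : IsWalk A n vs es) {i k : ℕ}
    (hik : i + k < n) (hi : vs i ∈ es (i + k)) :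
    IsWalk A (n - k) (fun t => if t ≤ i then vs t else vs (t + k))
      (fun t => if t < i then es t else es (t + k)) := by
  intro t ht
  rcases lt_trichotomy t i with hti | rfl | hti
  · simpa [hti, hti.le, Nat.succ_le_of_lt hti] using hw t (by omega)
  · simpa [add_right_comm t 1 k, hi] using And.intro (hw (t + k) hik).1 (hw (t + k) hik).2.2
  · simpa [hti.not_gt, hti.not_ge, show ¬ t + 1 ≤ i by omega, add_right_comm t 1 k]
      using hw (t + k) (by omega)

/-- A shortest walk is a path. -/
theorem exists_path_of_reflTransGen (h : Relation.ReflTransGen (Adj A) u v) :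
    ∃ n vs es, IsWalk A n vs es ∧ vs 0 = u ∧ vs n = v ∧
      Set.InjOn vs (Set.Iic n) ∧ Set.InjOn es (Set.Iio n) := by
  classical
  have hex := exists_isWalk_of_reflTransGen h
  obtain ⟨vs, es, hw, h0, hn⟩ := Nat.find_spec hex
  set n := Nat.find hex
  have hmin : ∀ m < n, ¬ ∃ vs es, IsWalk A m vs es ∧ vs 0 = u ∧ vs m = v :=
    fun m hm => Nat.find_min hex hm
  have no_skip : ∀ i k, 0 < k → i + k < n → vs i ∉ es (i + k) := fun i k hk hik hi =>
    hmin (n - k) (by omega) ⟨_, _, hw.skip hik hi, by simp [h0],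
      by simp [show ¬ n - k ≤ i by omega, Nat.sub_add_cancel (show k ≤ n by omega), hn]⟩
  have hvs : ∀ i j, i < j → j ≤ n → vs i ≠ vs j := by
    intro i j hij hjn hv
    rcases hjn.lt_or_eq with hjn | rfl
    · exact no_skip i (j - i) (by omega) (by omega)
        (by rw [Nat.add_sub_cancel' hij.le, hv]; exact (hw j hjn).2.1)
    · exact hmin i hij ⟨vs, es, fun t ht => hw t (by omega), h0, hv.trans hn⟩
  have hes : ∀ i j, i < j → j < n → es i ≠ es j := fun i j hij hjn he =>
    no_skip i (j - i) (by omega) (by omega)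
      (by rw [Nat.add_sub_cancel' hij.le, ← he]; exact (hw i (by omega)).2.1)
  refine ⟨n, vs, es, hw, h0, hn, fun i hi j hj hij => ?_, fun i hi j hj hij => ?_⟩ <;>
    simp only [Set.mem_Iic, Set.mem_Iio] at hi hj <;> by_contra hne <;>
    rcases Nat.lt_or_gt_of_ne hne with hlt | hlt
  exacts [hvs i j hlt hj hij, hvs j i hlt hi hij.symm, hes i j hlt hj hij, hes j i hlt hi hij.symm]

theorem hasCycle_of_closed_walk {k : ℕ} (hk : 2 ≤ k) {vs : ℕ → α} {es : ℕ → Finset α}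
    (hvs : Set.InjOn vs (Set.Iio k)) (hes : Set.InjOn es (Set.Iio k))
    (hmem : ∀ i < k, es i ∈ E ∧ vs i ∈ es i ∧ vs ((i + 1) % k) ∈ es i) : HasCycle E := by
  have : NeZero k := ⟨by omega⟩
  have hsucc (i : ZMod k) : (i + 1).val = (i.val + 1) % k := by
    rw [ZMod.val_add, ZMod.val_one_eq_one_mod, Nat.mod_eq_of_lt (by omega : 1 < k)]
  have hlt (i : ZMod k) : i.val ∈ Set.Iio k := ZMod.val_lt i
  exact ⟨⟨k, hk, fun i => vs i.val, fun i => es i.val,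
    fun i j h => ZMod.val_injective k (hvs (hlt i) (hlt j) h),
    fun i j h => ZMod.val_injective k (hes (hlt i) (hlt j) h),
    fun i => (hmem _ (hlt i)).1, fun i => (hmem _ (hlt i)).2.1,
    fun i => by simpa only [hsucc] using (hmem _ (hlt i)).2.2⟩⟩

theorem hasCycle_of_reflTransGen {f : Finset α} (hA : A ⊆ E) (hf : f ∈ E) (hfA : f ∉ A)
    (huv : u ≠ v) (hu : u ∈ f) (hv : v ∈ f) (h : Relation.ReflTransGen (Adj A) u v) :
    HasCycle E := by
  classical
  obtain ⟨n, vs, es, hw, h0, hn, hvs, hes⟩ := exists_path_of_reflTransGen h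
  have hn0 : n ≠ 0 := by rintro rfl; exact huv (h0.symm.trans hn)
  have hne (i : ℕ) (hi : i < n) : es i ≠ f := fun h => hfA (h ▸ (hw i hi).1)
  refine hasCycle_of_closed_walk (k := n + 1) (es := Function.update es n f) (by omega)
    (fun i hi j hj => hvs (by simp at hi ⊢; omega) (by simp at hj ⊢; omega)) ?_ fun i hi => ?_
  · intro i hi j hj hij
    simp only [Set.mem_Iio] at hi hj
    rcases Nat.lt_succ_iff_lt_or_eq.1 hi with hi | rfl <;>
      rcases Nat.lt_succ_iff_lt_or_eq.1 hj with hj | rfl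
    · simp only [Function.update_of_ne hi.ne, Function.update_of_ne hj.ne] at hij
      exact hes hi hj hij
    · simp only [Function.update_of_ne hi.ne, Function.update_self] at hij
      exact absurd hij (hne i hi)
    · simp only [Function.update_of_ne hj.ne, Function.update_self] at hij
      exact absurd hij.symm (hne j hj)
    · rfl
  · rcases Nat.lt_succ_iff_lt_or_eq.1 hi with hi | rfl
    · simpa [Function.update_apply, hi.ne, Nat.mod_eq_of_lt (Nat.succ_lt_succ hi)]
        using And.imp_left (fun h => hA h) (hw i hi)
    · simpa [h0, hn] using ⟨hf, hv, hu⟩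

theorem Uniform3.nonempty (h3 : Uniform3 E) {f : Finset α} (hf : f ∈ E) : f.Nonempty :=
  card_pos.1 (by rw [h3 f hf]; norm_num)

variable [DecidableEq α]

theorem exists_eq_insert_insert_singleton {e : Finset α} (he : #e = 3) (hy : y ∈ e) (hz : z ∈ e)
    (hyz : y ≠ z) : ∃ x, e = {x, y, z} := by
  have hz' : z ∈ e.erase y := mem_erase.2 ⟨hyz.symm, hz⟩
  obtain ⟨x, hx⟩ := card_eq_one.1 <| show #((e.erase y).erase z) = 1 by
    rw [card_erase_of_mem hz', card_erase_of_mem hy, he]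
  refine ⟨x, ?_⟩
  rw [← insert_erase hy, ← insert_erase hz', hx]
  ext
  simp only [mem_insert, mem_singleton]
  tauto

/-- At most one vertex of `e` is joined to `W`, as the vertices of `e` lie in distinct trees
of `E`. -/
theorem exists_forall_reflTransGen_eq {e : Finset α} (he : e.Nonempty)
    (hac : ¬ HasCycle (insert e E)) (heE : e ∉ E) {W : Finset α}
    (hW : ∀ a ∈ W, ∀ b ∈ W, Relation.ReflTransGen (Adj (insert e E)) a b → a = b) :
    ∃ a ∈ e, ∀ w ∈ W, ∀ b ∈ e, Relation.ReflTransGen (Adj E) w b → b = a := by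
  have hEe : E ⊆ insert e E := subset_insert e E
  by_cases hex : ∃ w ∈ W, ∃ a ∈ e, Relation.ReflTransGen (Adj E) w a
  · obtain ⟨w₀, hw₀, a, ha, hw₀a⟩ := hex
    refine ⟨a, ha, fun w hw b hb hwb => ?_⟩
    obtain rfl : w = w₀ := hW w hw w₀ hw₀ <| (reflTransGen_adj_mono hEe hwb).trans <|
      (reflTransGen_adj_of_mem (mem_insert_self e E) hb ha).trans <|
        reflTransGen_adj_symm (reflTransGen_adj_mono hEe hw₀a)
    by_contra hba
    exact hac (hasCycle_of_reflTransGen hEe (mem_insert_self e E) heE hba hb ha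
      ((reflTransGen_adj_symm hwb).trans hw₀a))
  · push Not at hex
    obtain ⟨a, ha⟩ := he
    exact ⟨a, ha, fun w hw b hb hwb => absurd hwb (hex w hw b hb)⟩

theorem two_mul_card_add_card_le (h3 : Uniform3 E) (hac : ¬ HasCycle E) {W : Finset α}
    (hW : ∀ a ∈ W, ∀ b ∈ W, Relation.ReflTransGen (Adj E) a b → a = b) :
    2 * #E + #W ≤ #(E.biUnion id ∪ W) := by
  induction E using Finset.induction_on generalizing W with
  | empty => simp
  | @insert e E heE ih =>
    have hEe : E ⊆ insert e E := subset_insert e E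
    obtain ⟨a, ha, hWa⟩ :=
      exists_forall_reflTransGen_eq (h3.nonempty (mem_insert_self e E)) hac heE hW
    have hdisj : Disjoint W (e.erase a) := disjoint_left.2 fun b hbW hbe =>
      (mem_erase.1 hbe).1 (hWa b hbW b (mem_erase.1 hbe).2 .refl)
    have hW' : ∀ b ∈ W ∪ e.erase a, ∀ c ∈ W ∪ e.erase a,
        Relation.ReflTransGen (Adj E) b c → b = c := by
      intro b hb c hc hbc
      rcases mem_union.1 hb with hb | hb <;> rcases mem_union.1 hc with hc | hc
      · exact hW b hb c hc (reflTransGen_adj_mono hEe hbc)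
      · exact absurd (hWa b hb c (mem_erase.1 hc).2 hbc) (mem_erase.1 hc).1
      · exact absurd (hWa c hc b (mem_erase.1 hb).2 (reflTransGen_adj_symm hbc)) (mem_erase.1 hb).1
      · by_contra hbc'
        exact hac (hasCycle_of_reflTransGen hEe (mem_insert_self e E) heE hbc'
          (mem_of_mem_erase hb) (mem_of_mem_erase hc) hbc)
    have key := ih (fun f hf => h3 f (mem_insert_of_mem hf)) (fun h => hac (h.mono_s10 hEe)) hW'
    have hsub : E.biUnion id ∪ (W ∪ e.erase a) ⊆ (insert e E).biUnion id ∪ W := by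
      rw [biUnion_insert]
      intro b hb
      simp only [mem_union, mem_erase, id] at hb ⊢
      tauto
    rw [card_union_of_disjoint hdisj, card_erase_of_mem ha, h3 e (mem_insert_self e E)] at key
    rw [card_insert_of_notMem heE]
    have := card_le_card hsub
    omega

theorem sum_hdegree_eq_sum_card_inter (E : Finset (Finset α)) (s : Finset α) :
    ∑ v ∈ s, hdegree E v = ∑ e ∈ E, #(s ∩ e) := by
  simpa [hdegree, bipartiteAbove, bipartiteBelow, filter_mem_eq_inter] using
    sum_card_bipartiteAbove_eq_sum_card_bipartiteBelow (fun v e => v ∈ e) (s := s) (t := E)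

theorem eq_of_hdegree_le_one {e f : Finset α} (h : hdegree E v ≤ 1) (he : e ∈ E) (hf : f ∈ E)
    (hve : v ∈ e) (hvf : v ∈ f) : e = f :=
  card_le_one.1 h e (mem_filter.2 ⟨he, hve⟩) f (mem_filter.2 ⟨hf, hvf⟩)

theorem card_lt_card_filter_hdegree_le_one (h3 : Uniform3 E) (hac : ¬ HasCycle E)
    (hne : E.Nonempty) : #E < #((E.biUnion id).filter (hdegree E · ≤ 1)) := by
  set U := E.biUnion id
  have hU : 2 * #E + 1 ≤ #U := by
    obtain ⟨e, he⟩ := hne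
    obtain ⟨w, hw⟩ := h3.nonempty he
    have hwU : w ∈ U := mem_biUnion.2 ⟨e, he, hw⟩
    have := two_mul_card_add_card_le h3 hac (W := {w}) (by simp)
    rwa [union_eq_left.2 (singleton_subset_iff.2 hwU), card_singleton] at this
  have hsum : ∑ v ∈ U, hdegree E v = 3 * #E := by
    rw [sum_hdegree_eq_sum_card_inter, sum_congr rfl fun e he => by
      have heU : e ⊆ U := subset_biUnion_of_mem id he
      rw [inter_eq_right.2 heU, h3 e he]]
    simp [mul_comm]
  have : 2 * #U ≤ 3 * #E + #(U.filter (hdegree E · ≤ 1)) :=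
    calc 2 * #U = ∑ v ∈ U, 2 := by simp [mul_comm]
      _ ≤ ∑ v ∈ U, (hdegree E v + if hdegree E v ≤ 1 then 1 else 0) := sum_le_sum fun v hv => by
        obtain ⟨e, he, hve⟩ := mem_biUnion.1 hv
        have : 0 < hdegree E v := card_pos.2 ⟨e, mem_filter.2 ⟨he, hve⟩⟩
        split_ifs <;> omega
      _ = _ := by rw [sum_add_distrib, sum_boole, hsum]; rfl
  omega

theorem exists_pendant_edge (h3 : Uniform3 E) (hac : ¬ HasCycle E) (hne : E.Nonempty) :
    ∃ x y z : α, {x, y, z} ∈ E ∧ hdegree E y ≤ 1 ∧ hdegree E z ≤ 1 := by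
  set U₁ := (E.biUnion id).filter (hdegree E · ≤ 1)
  have hsum : ∑ e ∈ E, #(U₁ ∩ e) = #U₁ := by
    rw [← sum_hdegree_eq_sum_card_inter, card_eq_sum_ones]
    refine sum_congr rfl fun v hv => le_antisymm (mem_filter.1 hv).2 ?_
    obtain ⟨e, he, hve⟩ := mem_biUnion.1 (mem_filter.1 hv).1
    exact card_pos.2 ⟨e, mem_filter.2 ⟨he, hve⟩⟩
  obtain ⟨e, he, hlt⟩ : ∃ e ∈ E, 1 < #(U₁ ∩ e) := exists_lt_of_sum_lt <| by
    simpa [hsum] using card_lt_card_filter_hdegree_le_one h3 hac hne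
  obtain ⟨y, hy, z, hz, hyz⟩ := one_lt_card.1 hlt
  obtain ⟨x, rfl⟩ := exists_eq_insert_insert_singleton (h3 e he) (mem_inter.1 hy).2
    (mem_inter.1 hz).2 hyz
  exact ⟨x, y, z, he, (mem_filter.1 (mem_inter.1 hy).1).2, (mem_filter.1 (mem_inter.1 hz).1).2⟩

theorem card_biUnion_le_of_forall_mem {D : Finset (Finset α)} {x : α} {k : ℕ}
    (hx : ∀ f ∈ D, x ∈ f) (hk : ∀ f ∈ D, #f = k) : #(D.biUnion id) ≤ (k - 1) * #D + 1 := by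
  calc #(D.biUnion id) ≤ #(insert x (D.biUnion (·.erase x))) := by
        refine card_le_card fun b hb => ?_
        obtain ⟨f, hf, hbf⟩ := mem_biUnion.1 hb
        by_cases hbx : b = x
        · exact hbx ▸ mem_insert_self b _
        · exact mem_insert_of_mem (mem_biUnion.2 ⟨f, hf, mem_erase.2 ⟨hbx, hbf⟩⟩)
    _ ≤ ∑ f ∈ D, #(f.erase x) + 1 := (card_insert_le _ _).trans (by gcongr; exact card_biUnion_le)
    _ = (k - 1) * #D + 1 := by
        rw [sum_congr rfl fun f hf => by rw [card_erase_of_mem (hx f hf), hk f hf]]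
        simp [mul_comm]

/-- Follow a walk from an edge outside `B` until it first meets a vertex of `B`. -/
theorem exists_reflTransGen_sdiff_to_biUnion {B : Finset (Finset α)} {g₀ : Finset α} {t : α}
    (hg₀ : g₀ ∈ E \ B) (hu : u ∈ g₀) (h : Relation.ReflTransGen (Adj E) u t)
    (ht : t ∈ B.biUnion id) :
    ∃ p ∈ B.biUnion id, (∃ g ∈ E \ B, p ∈ g) ∧ Relation.ReflTransGen (Adj (E \ B)) u p := by
  induction h using Relation.ReflTransGen.head_induction_on generalizing g₀ with
  | refl => exact ⟨t, ht, ⟨g₀, hg₀, hu⟩, .refl⟩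
  | @head a c hac _ ih =>
    by_cases haB : a ∈ B.biUnion id
    · exact ⟨a, haB, ⟨g₀, hg₀, hu⟩, .refl⟩
    · obtain ⟨g, hg, hag, hcg⟩ := hac
      have hgB : g ∈ E \ B := mem_sdiff.2 ⟨hg, fun hgB => haB (mem_biUnion.2 ⟨g, hgB, hag⟩)⟩
      obtain ⟨p, hp, hpg, hcp⟩ := ih hgB hcg
      exact ⟨p, hp, hpg, .head ⟨g, hgB, hag, hcg⟩ hcp⟩

theorem reflTransGen_sdiff_of_not_reflTransGen {C : Finset (Finset α)} {w₀ : α}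
    (hC : ∀ g ∈ C, ∀ a ∈ g, Relation.ReflTransGen (Adj E) a w₀)
    (h : Relation.ReflTransGen (Adj E) u w) (hu : ¬ Relation.ReflTransGen (Adj E) u w₀) :
    Relation.ReflTransGen (Adj (E \ C)) u w := by
  induction h using Relation.ReflTransGen.head_induction_on with
  | refl => exact .refl
  | @head a c hac _ ih =>
    obtain ⟨g, hg, hag, hcg⟩ := hac
    have hgC : g ∉ C := fun hgC => hu (hC g hgC a hag)
    exact .head ⟨g, mem_sdiff.2 ⟨hg, hgC⟩, hag, hcg⟩
      (ih fun hc => hu (.head ⟨g, hg, hag, hcg⟩ hc))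

def EdgesReach (E : Finset (Finset α)) (W : Finset α) : Prop :=
  ∀ f ∈ E, ∃ v ∈ f, ∃ w ∈ W, Relation.ReflTransGen (Adj E) v w

/-- Once the edges through `x` are deleted, the other vertices of those edges take over the role
of the vertex `w₀` of `W` in the tree of `x`. -/
theorem EdgesReach.sdiff_filter_mem {W : Finset α} (hW : EdgesReach E W) (he : {x, y, z} ∈ E)
    (hy : hdegree E y ≤ 1) (hz : hdegree E z ≤ 1) {w₀ : α}
    (hxw₀ : Relation.ReflTransGen (Adj E) x w₀) :
    EdgesReach (E \ E.filter (x ∈ ·))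
      (W.erase w₀ ∪ ((E.filter (x ∈ ·)).biUnion id \ {x, y, z})) := by
  set D := E.filter (x ∈ ·)
  have heD : {x, y, z} ∈ D := mem_filter.2 ⟨he, by simp⟩
  intro f hf
  obtain ⟨v, hv, w, hw, hvw⟩ := hW f (mem_sdiff.1 hf).1
  by_cases hvw₀ : Relation.ReflTransGen (Adj E) v w₀
  · obtain ⟨p, hp, ⟨g, hg, hpg⟩, hvp⟩ := exists_reflTransGen_sdiff_to_biUnion hf hv
      (hvw₀.trans (reflTransGen_adj_symm hxw₀)) (mem_biUnion.2 ⟨_, heD, by simp⟩)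
    obtain ⟨hgE, hgD⟩ := mem_sdiff.1 hg
    have hpe : p ∉ ({x, y, z} : Finset α) := by
      intro hpe
      simp only [mem_insert, mem_singleton] at hpe
      rcases hpe with rfl | rfl | rfl
      · exact hgD (mem_filter.2 ⟨hgE, hpg⟩)
      · exact hgD (eq_of_hdegree_le_one hy he hgE (by simp) hpg ▸ heD)
      · exact hgD (eq_of_hdegree_le_one hz he hgE (by simp) hpg ▸ heD)
    exact ⟨v, hv, p, mem_union_right _ (mem_sdiff.2 ⟨hp, hpe⟩), hvp⟩
  · have hDw₀ : ∀ g ∈ D, ∀ a ∈ g, Relation.ReflTransGen (Adj E) a w₀ := fun g hg a ha =>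
      (reflTransGen_adj_of_mem (mem_filter.1 hg).1 ha (mem_filter.1 hg).2).trans hxw₀
    exact ⟨v, hv, w, mem_union_left _ (mem_erase.2 ⟨fun h => hvw₀ (h ▸ hvw), hw⟩),
      reflTransGen_sdiff_of_not_reflTransGen hDw₀ hvw hvw₀⟩

theorem exists_cover_of_edgesReach (E : Finset (Finset α)) (h3 : Uniform3 E)
    (hac : ¬ HasCycle E) (W : Finset α) (hW : EdgesReach E W) :
    ∃ S, IsVertexCover E S ∧ 3 * #S ≤ 2 * #E + #W := by
  induction E using Finset.strongInduction generalizing W with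
  | H E ih =>
  rcases E.eq_empty_or_nonempty with rfl | hne
  · exact ⟨∅, by simp [IsVertexCover], by simp⟩
  obtain ⟨x, y, z, he, hy, hz⟩ := exists_pendant_edge h3 hac hne
  have hDE : E.filter (x ∈ ·) ⊆ E := filter_subset _ _
  have heD : {x, y, z} ∈ E.filter (x ∈ ·) := mem_filter.2 ⟨he, by simp⟩
  obtain ⟨v₀, hv₀, w₀, hw₀, hv₀w₀⟩ := hW _ he
  obtain ⟨S, hS, hcard⟩ := ih _ (sdiff_ssubset hDE ⟨_, heD⟩)
    (fun f hf => h3 f (mem_sdiff.1 hf).1) (fun h => hac (h.mono_s10 sdiff_subset)) _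
    (hW.sdiff_filter_mem he hy hz ((reflTransGen_adj_of_mem he (by simp) hv₀).trans hv₀w₀))
  set D := E.filter (x ∈ ·)
  refine ⟨insert x S, fun f hf => ?_, ?_⟩
  · by_cases hxf : x ∈ f
    · exact ⟨x, mem_insert_self x S, hxf⟩
    · obtain ⟨a, ha, haf⟩ := hS f (mem_sdiff.2 ⟨hf, fun h => hxf (mem_filter.1 h).2⟩)
      exact ⟨a, mem_insert_of_mem ha, haf⟩
  · have hVD : #(D.biUnion id) ≤ 2 * #D + 1 :=
      card_biUnion_le_of_forall_mem (fun f hf => (mem_filter.1 hf).2) (fun f hf => h3 f (hDE hf))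
    have heVD : {x, y, z} ⊆ D.biUnion id := subset_biUnion_of_mem id heD
    have hW' : #(W.erase w₀ ∪ (D.biUnion id \ {x, y, z})) ≤ #W - 1 + (#(D.biUnion id) - 3) :=
      calc _ ≤ #(W.erase w₀) + #(D.biUnion id \ {x, y, z}) := card_union_le _ _
        _ = _ := by rw [card_erase_of_mem hw₀, card_sdiff_of_subset heVD, h3 _ he]
    have := card_insert_le x S
    have := card_sdiff_of_subset hDE
    have := card_le_card hDE
    have := card_pos.2 ⟨_, heD⟩
    have := card_pos.2 ⟨w₀, hw₀⟩
    omega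

end Hypergraph

/-- A connected 3-uniform hypergraph with m edges containing
no cycle (a hypertree) satisfies τ(H) ≤ (2m+1)/3, i.e. 3·τ(H) ≤ 2m + 1. -/
theorem stmt10 (E : Finset (Finset V)) (h3 : Uniform3 E) (hconn : HConnected E)
    (hacyclic : ¬ HasCycle E) :
    3 * coverNum E ≤ 2 * E.card + 1 := by
  obtain ⟨S, hS, hcard⟩ := exists_cover_of_edgesReach E h3 hacyclic {Classical.arbitrary V}
    fun f hf =>
      let ⟨v, hv⟩ := h3.nonempty hf
      ⟨v, hv, _, mem_singleton_self _, hconn _ _⟩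
  have : coverNum E ≤ #S := Nat.sInf_le ⟨S, hS, rfl⟩
  rw [card_singleton] at hcard
  omega
end
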